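/- Let V : ℝ^m → ℝ be a function with V(0) = 0 and V(x) > 0 for all x ≠ 0, and let φ : ℝ^m → ℝ → ℝ^m be a map such that for every x ≠ 0: (i) φ(x)(0) = x; (ii) for every t > −V(x), φ(x)(t) ≠ 0 and V(φ(x)(t)) = V(x) + t; (iii) for every t > −V(x) and every s > −(V(x)+t), φ(φ(x)(t))(s) = φ(x)(t+s). Then for every c > 0, the map Φ(p, t) = φ(p)(t) from {p ∈ ℝ^m | V(p) = c} × (−c, ∞) to ℝ^m \ {0} is a bijection, with inverse given by x ↦ (φ(x)(c − V(x)), V(x) − c). -/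

import Mathlib

/-!
Along a flow line of `φ` the value of `V` grows at unit rate, so flowing a point `x` for time
`c - V x` lands it on the level set `{V = c}`, and the flow property lets one flow back for time
`V x - c`. The two maps are therefore mutually inverse.
-/

open Set

/-- Conditions (i)–(iii) on `φ`, with the punctured space replaced by a domain `U`. -/
structure IsUnitSpeedFlow {X : Type*} (V : X → ℝ) (φ : X → ℝ → X) (U : Set X) : Prop where
  map_zero : ∀ x ∈ U, φ x 0 = x
  mem : ∀ x ∈ U, ∀ t, -V x < t → φ x t ∈ U
  apply_eq_add : ∀ x ∈ U, ∀ t, -V x < t → V (φ x t) = V x + t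
  map_add : ∀ x ∈ U, ∀ t, -V x < t → ∀ s, -(V x + t) < s → φ (φ x t) s = φ x (t + s)

namespace IsUnitSpeedFlow

variable {X : Type*} {V : X → ℝ} {φ : X → ℝ → X} {U : Set X} {c : ℝ}

theorem mapsTo_levelSet_prod (hφ : IsUnitSpeedFlow V φ U) (hL : ∀ p, V p = c → p ∈ U) :
    MapsTo (fun p : X × ℝ => φ p.1 p.2) ({p | V p = c} ×ˢ Ioi (-c)) U := by
  rintro ⟨p, t⟩ ⟨hp, ht⟩
  exact hφ.mem p (hL p hp) t (by simpa [hp.symm] using ht)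

theorem mapsTo_toLevelSet (hφ : IsUnitSpeedFlow V φ U) (hVpos : ∀ x ∈ U, 0 < V x)
    (hc : 0 < c) :
    MapsTo (fun x => (φ x (c - V x), V x - c)) U ({p | V p = c} ×ˢ Ioi (-c)) := by
  intro x hx
  have hVx := hVpos x hx
  refine ⟨?_, ?_⟩
  · change V (φ x (c - V x)) = c
    rw [hφ.apply_eq_add x hx _ (by linarith)]
    ring
  · exact mem_Ioi.2 (by linarith)

theorem leftInvOn_toLevelSet (hφ : IsUnitSpeedFlow V φ U) (hL : ∀ p, V p = c → p ∈ U)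
    (hc : 0 < c) :
    LeftInvOn (fun x => (φ x (c - V x), V x - c)) (fun p : X × ℝ => φ p.1 p.2)
      ({p | V p = c} ×ˢ Ioi (-c)) := by
  rintro ⟨p, t⟩ ⟨hp, ht⟩
  have hpU := hL p hp
  replace hp : V p = c := hp
  replace ht : -V p < t := by rw [hp]; exact ht
  have hV : V (φ p t) = c + t := by rw [hφ.apply_eq_add p hpU t ht, hp]
  have hback : φ (φ p t) (-t) = p := by
    rw [hφ.map_add p hpU t ht (-t) (by linarith), add_neg_cancel, hφ.map_zero p hpU]
  simp only [hV, add_sub_cancel_left, sub_add_cancel_left, hback]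

theorem rightInvOn_toLevelSet (hφ : IsUnitSpeedFlow V φ U) (hVpos : ∀ x ∈ U, 0 < V x)
    (hc : 0 < c) :
    RightInvOn (fun x => (φ x (c - V x), V x - c)) (fun p : X × ℝ => φ p.1 p.2) U := by
  intro x hx
  have hVx := hVpos x hx
  change φ (φ x (c - V x)) (V x - c) = x
  rw [hφ.map_add x hx _ (by linarith) _ (by linarith), sub_add_sub_cancel', sub_self,
    hφ.map_zero x hx]

theorem invOn_toLevelSet (hφ : IsUnitSpeedFlow V φ U) (hVpos : ∀ x ∈ U, 0 < V x)
    (hL : ∀ p, V p = c → p ∈ U) (hc : 0 < c) :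
    InvOn (fun x => (φ x (c - V x), V x - c)) (fun p : X × ℝ => φ p.1 p.2)
      ({p | V p = c} ×ˢ Ioi (-c)) U :=
  ⟨hφ.leftInvOn_toLevelSet hL hc, hφ.rightInvOn_toLevelSet hVpos hc⟩

theorem bijOn_levelSet_prod (hφ : IsUnitSpeedFlow V φ U) (hVpos : ∀ x ∈ U, 0 < V x)
    (hL : ∀ p, V p = c → p ∈ U) (hc : 0 < c) :
    BijOn (fun p : X × ℝ => φ p.1 p.2) ({p | V p = c} ×ˢ Ioi (-c)) U :=
  (hφ.invOn_toLevelSet hVpos hL hc).bijOn (hφ.mapsTo_levelSet_prod hL)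
    (hφ.mapsTo_toLevelSet hVpos hc)

end IsUnitSpeedFlow

theorem stmt8 {m : ℕ} (V : EuclideanSpace ℝ (Fin m) → ℝ)
    (φ : EuclideanSpace ℝ (Fin m) → ℝ → EuclideanSpace ℝ (Fin m))
    (hV0 : V 0 = 0) (hVpos : ∀ x, x ≠ 0 → 0 < V x)
    (hφ0 : ∀ x, x ≠ 0 → φ x 0 = x)
    (hne : ∀ x, x ≠ 0 → ∀ t, -V x < t → φ x t ≠ 0)
    (hVt : ∀ x, x ≠ 0 → ∀ t, -V x < t → V (φ x t) = V x + t)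
    (hflow : ∀ x, x ≠ 0 → ∀ t, -V x < t → ∀ s, -(V x + t) < s →
      φ (φ x t) s = φ x (t + s))
    (c : ℝ) (hc : 0 < c) :
    Set.BijOn (fun p : EuclideanSpace ℝ (Fin m) × ℝ => φ p.1 p.2)
      ({p | V p = c} ×ˢ Set.Ioi (-c)) {x | x ≠ 0} ∧
    Set.InvOn (fun x => (φ x (c - V x), V x - c))
      (fun p : EuclideanSpace ℝ (Fin m) × ℝ => φ p.1 p.2)
      ({p | V p = c} ×ˢ Set.Ioi (-c)) {x | x ≠ 0} := by
  have hφ : IsUnitSpeedFlow V φ {x | x ≠ 0} := ⟨hφ0, hne, hVt, hflow⟩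
  have hL : ∀ p, V p = c → p ∈ {x | x ≠ 0} := by
    rintro p hp rfl
    linarith
  exact ⟨hφ.bijOn_levelSet_prod hVpos hL hc, hφ.invOn_toLevelSet hVpos hL hc⟩
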